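/- (Fomin's mirror-hall problem.) For every point O ∈ [0,1]² there exists a finite set B ⊆ [0,1]² with O ∉ B such that for all O', O'' ∈ ℝ² with Φ(O') = O, Φ(O'') = O and O' ≠ O'', there exists t ∈ (0,1) with Φ(O' + t·(O'' − O')) ∈ B; that is, finitely many points, all different from O, block every billiard trajectory in the unit square from O back to itself. -/

import Mathlib

/-!
Write `O = (a, b)`. The set `S = Φ⁻¹{O}` is a finite union of translates of the lattice `(2ℤ)²`,
hence uniformly discrete, and `Φ` folds the midpoint of any two points of `S` into the grid
`{a, 1 - a, 0, 1} × {b, 1 - b, 0, 1}`; take `B` to be this grid without `O`. For `O' ≠ O''` in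
`S`, either their midpoint is not in `S`, and then it is blocked, or we repeat with `O'` and the
midpoint. The distance halves at each step, so uniform discreteness stops the descent.
-/

open Set

theorem exists_pos_forall_le_abs_add_intCast (c : ℝ) :
    ∃ δ > 0, ∀ m : ℤ, c + m ≠ 0 → δ ≤ |c + m| := by
  -- distinct `c + m` are at least `1` apart, so at most one of them is within `1 / 2` of `0`
  by_cases h : ∃ m₀ : ℤ, c + m₀ ≠ 0 ∧ |c + m₀| < 1 / 2
  · obtain ⟨m₀, hne, hlt⟩ := h
    refine ⟨|c + m₀|, abs_pos.2 hne, fun m _ => ?_⟩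
    rcases eq_or_ne m m₀ with rfl | hm
    · exact le_rfl
    · have h1 : (1 : ℝ) ≤ |(m : ℝ) - m₀| := by
        exact_mod_cast Int.one_le_abs (sub_ne_zero.2 hm)
      have h2 : |(m : ℝ) - m₀| ≤ |c + m| + |c + m₀| := by
        simpa using abs_sub (c + m) (c + m₀)
      linarith
  · push Not at h
    exact ⟨1 / 2, by norm_num, h⟩

theorem Set.Pairwise.prod_le_dist {α β : Type*} [PseudoMetricSpace α] [PseudoMetricSpace β]
    {s : Set α} {t : Set β} {δ₁ δ₂ : ℝ} (hs : s.Pairwise fun x y => δ₁ ≤ dist x y)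
    (ht : t.Pairwise fun x y => δ₂ ≤ dist x y) :
    (s ×ˢ t).Pairwise fun p q => min δ₁ δ₂ ≤ dist p q := by
  rintro p ⟨hp₁, hp₂⟩ q ⟨hq₁, hq₂⟩ hpq
  rw [Prod.dist_eq]
  by_cases h : p.1 = q.1
  · have h' : p.2 ≠ q.2 := fun h' => hpq (Prod.ext h h')
    exact (min_le_right _ _).trans ((ht hp₂ hq₂ h').trans (le_max_right _ _))
  · exact (min_le_left _ _).trans ((hs hp₁ hq₁ h).trans (le_max_left _ _))

theorem exists_lineMap_mem_of_midpoint_mem_union {V P : Type*} [NormedAddCommGroup V]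
    [NormedSpace ℝ V] [MetricSpace P] [NormedAddTorsor V P] {S T : Set P} {δ : ℝ} (hδ : 0 < δ)
    (hsep : S.Pairwise fun p q => δ ≤ dist p q)
    (hmid : ∀ p ∈ S, ∀ q ∈ S, midpoint ℝ p q ∈ S ∪ T) {p q : P} (hp : p ∈ S) (hq : q ∈ S)
    (hpq : p ≠ q) : ∃ t ∈ Ioo (0 : ℝ) 1, AffineMap.lineMap p q t ∈ T := by
  obtain ⟨n, hn⟩ := pow_unbounded_of_one_lt (dist p q / δ) one_lt_two
  rw [div_lt_iff₀ hδ] at hn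
  induction n generalizing q with
  | zero => exact absurd (hsep hp hq hpq) (by simpa using hn)
  | succ n ih =>
    rcases hmid p hp q hq with hm | hm
    · have hpm : p ≠ midpoint ℝ p q := by rwa [Ne, left_eq_midpoint_iff]
      have hdist : dist p (midpoint ℝ p q) < 2 ^ n * δ := by
        rw [dist_left_midpoint, Real.norm_two]
        rw [pow_succ] at hn
        linarith
      obtain ⟨t, ⟨ht0, ht1⟩, htT⟩ := ih hm hpm hdist
      refine ⟨t * ⅟2, ⟨mul_pos ht0 (by norm_num), by rw [invOf_eq_inv]; linarith⟩, ?_⟩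
      rwa [midpoint, AffineMap.lineMap_lineMap_right] at htT
    · exact ⟨⅟2, ⟨by norm_num, by norm_num⟩, hm⟩

def IsTriangleWave (φ : ℝ → ℝ) : Prop :=
  Function.Periodic φ 2 ∧ ∀ x ∈ Icc (-1 : ℝ) 1, φ x = |x|

noncomputable def midpointValues (a : ℝ) : Finset ℝ := {a, 1 - a, 0, 1}

theorem coe_midpointValues_subset {a : ℝ} (ha : a ∈ Icc (0 : ℝ) 1) :
    ↑(midpointValues a) ⊆ Icc (0 : ℝ) 1 := by
  obtain ⟨ha0, ha1⟩ := ha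
  intro v hv
  simp only [midpointValues, Finset.coe_insert, Finset.coe_singleton, mem_insert_iff,
    mem_singleton_iff] at hv
  rcases hv with rfl | rfl | rfl | rfl <;> constructor <;> linarith

namespace IsTriangleWave

variable {φ : ℝ → ℝ}

theorem exists_int_eq_of_apply_eq (hφ : IsTriangleWave φ) {a x : ℝ} (ha : 0 ≤ a)
    (hx : φ x = a) : ∃ k : ℤ, x = 2 * k + a ∨ x = 2 * k - a := by
  set k := toIcoDiv two_pos (-1) x
  have hmem : x - k * 2 ∈ Ico (-1 : ℝ) 1 := by
    have h := toIcoMod_mem_Ico two_pos (-1 : ℝ) x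
    rwa [show (-1 : ℝ) + 2 = 1 by norm_num, ← self_sub_toIcoDiv_zsmul, zsmul_eq_mul] at h
  have hval : |x - k * 2| = a := by
    rw [← hφ.2 _ (Ico_subset_Icc_self hmem), hφ.1.sub_int_mul_eq, hx]
  refine ⟨k, ?_⟩
  rcases (abs_eq ha).1 hval with h | h
  · left; linarith
  · right; linarith

theorem apply_intCast_add (hφ : IsTriangleWave φ) (n : ℤ) {c : ℝ} (hc : c ∈ Icc (-1 : ℝ) 1) :
    φ (n + c) = |c| ∨ φ (n + c) = 1 - |c| := by
  obtain ⟨k, rfl | rfl⟩ := Int.even_or_odd' n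
  · left
    rw [← hφ.2 c hc, ← hφ.1.int_mul k c]
    push_cast; ring_nf
  · right
    have hodd : φ ((2 * k + 1 : ℤ) + c) = φ (1 + c) := by
      rw [← hφ.1.int_mul k (1 + c)]; push_cast; ring_nf
    rw [hodd]
    obtain ⟨hc0, hc1⟩ := hc
    rcases le_total c 0 with hc | hc
    · rw [hφ.2 _ ⟨by linarith, by linarith⟩, abs_of_nonneg (by linarith), abs_of_nonpos hc]
      ring
    · rw [← show c - 1 + 2 = 1 + c by ring, hφ.1, hφ.2 _ ⟨by linarith, by linarith⟩,
        abs_of_nonpos (by linarith), abs_of_nonneg hc]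
      ring

theorem apply_midpoint_mem (hφ : IsTriangleWave φ) {a x y : ℝ} (ha : a ∈ Icc (0 : ℝ) 1)
    (hx : φ x = a) (hy : φ y = a) : φ (midpoint ℝ x y) ∈ midpointValues a := by
  obtain ⟨k, hk⟩ := hφ.exists_int_eq_of_apply_eq ha.1 hx
  obtain ⟨l, hl⟩ := hφ.exists_int_eq_of_apply_eq ha.1 hy
  have hmid : ∃ c ∈ ({a, -a, 0} : Set ℝ), midpoint ℝ x y = (k + l : ℤ) + c := by
    rw [midpoint_eq_smul_add, smul_eq_mul, invOf_eq_inv]; push_cast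
    rcases hk with rfl | rfl <;> rcases hl with rfl | rfl
    · exact ⟨a, by simp, by ring⟩
    · exact ⟨0, by simp, by ring⟩
    · exact ⟨0, by simp, by ring⟩
    · exact ⟨-a, by simp, by ring⟩
  obtain ⟨c, hc, hxy⟩ := hmid
  obtain ⟨ha0, ha1⟩ := ha
  have hcI : c ∈ Icc (-1 : ℝ) 1 := by
    rcases hc with rfl | rfl | rfl <;> constructor <;> linarith
  have habs : |c| = a ∨ |c| = 0 := by
    rcases hc with rfl | rfl | rfl <;> simp [abs_of_nonneg ha0]
  rw [hxy]
  simp only [midpointValues, Finset.mem_insert, Finset.mem_singleton]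
  rcases hφ.apply_intCast_add (k + l) hcI with h | h <;> rcases habs with h' | h' <;>
    rw [h, h'] <;> norm_num

theorem exists_pairwise_le_dist (hφ : IsTriangleWave φ) {a : ℝ} (ha : 0 ≤ a) :
    ∃ δ > 0, (φ ⁻¹' {a}).Pairwise fun x y => δ ≤ dist x y := by
  obtain ⟨δ₀, hδ₀, h₀⟩ := exists_pos_forall_le_abs_add_intCast 0
  obtain ⟨δa, hδa, ha'⟩ := exists_pos_forall_le_abs_add_intCast a
  obtain ⟨δn, hδn, hn'⟩ := exists_pos_forall_le_abs_add_intCast (-a)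
  refine ⟨2 * min δ₀ (min δa δn), by positivity, fun x hx y hy hxy => ?_⟩
  obtain ⟨k, hk⟩ := hφ.exists_int_eq_of_apply_eq ha hx
  obtain ⟨l, hl⟩ := hφ.exists_int_eq_of_apply_eq ha hy
  have hdiff : ∃ c ∈ ({0, a, -a} : Set ℝ), x - y = 2 * (c + (k - l : ℤ)) := by
    push_cast
    rcases hk with rfl | rfl <;> rcases hl with rfl | rfl
    · exact ⟨0, by simp, by ring⟩
    · exact ⟨a, by simp, by ring⟩
    · exact ⟨-a, by simp, by ring⟩
    · exact ⟨0, by simp, by ring⟩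
  obtain ⟨c, hc, hxy'⟩ := hdiff
  have hne : c + (k - l : ℤ) ≠ 0 := fun h => hxy (sub_eq_zero.1 (by rw [hxy', h, mul_zero]))
  rw [Real.dist_eq, hxy', abs_mul, abs_two]
  gcongr
  rcases hc with rfl | rfl | rfl
  · exact (min_le_left _ _).trans (h₀ _ hne)
  · exact (min_le_right _ _).trans ((min_le_left _ _).trans (ha' _ hne))
  · exact (min_le_right _ _).trans ((min_le_right _ _).trans (hn' _ hne))

end IsTriangleWave

/-- Fomin's mirror-hall problem.  Here `φ : ℝ → ℝ` is the (unique) 2-periodic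
function with `φ x = |x|` on `[-1, 1]`, and `Φ (x, y) = (φ x, φ y)` is the folding
map `ℝ² → [0,1]²`; billiard trajectories in the unit square from `O` back to `O`
are exactly the paths `t ↦ Φ (O' + t • (O'' − O'))` with `Φ O' = O`, `Φ O'' = O`,
`O' ≠ O''`.  For every `O ∈ [0,1]²` there is a finite set `B ⊆ [0,1]²` with
`O ∉ B` meeting the interior of every such trajectory: finitely many points, all
different from `O`, block every billiard trajectory in the unit square from `O`
back to itself. -/
theorem square_billiard_self_blocking
    (φ : ℝ → ℝ)
    (hper : ∀ x : ℝ, φ (x + 2) = φ x)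
    (habs : ∀ x ∈ Set.Icc (-1 : ℝ) 1, φ x = |x|)
    (Φ : ℝ × ℝ → ℝ × ℝ)
    (hΦ : ∀ p : ℝ × ℝ, Φ p = (φ p.1, φ p.2))
    (O : ℝ × ℝ)
    (hO : O ∈ Set.Icc (0 : ℝ) 1 ×ˢ Set.Icc (0 : ℝ) 1) :
    ∃ B : Finset (ℝ × ℝ),
      ↑B ⊆ Set.Icc (0 : ℝ) 1 ×ˢ Set.Icc (0 : ℝ) 1 ∧
      O ∉ B ∧
      ∀ O' O'' : ℝ × ℝ, Φ O' = O → Φ O'' = O → O' ≠ O'' →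
        ∃ t ∈ Set.Ioo (0 : ℝ) 1, Φ (O' + t • (O'' - O')) ∈ B := by
  obtain rfl : Φ = Prod.map φ φ := funext hΦ
  have hφ : IsTriangleWave φ := ⟨hper, habs⟩
  obtain ⟨ha, hb⟩ := hO
  set B := (midpointValues O.1 ×ˢ midpointValues O.2).erase O
  set S : Set (ℝ × ℝ) := (φ ⁻¹' {O.1}) ×ˢ (φ ⁻¹' {O.2})
  have hS : ∀ p, p ∈ S ↔ Prod.map φ φ p = O := fun p => (Prod.ext_iff (x := Prod.map φ φ p) (y := O)).symm
  refine ⟨B, ?_, Finset.notMem_erase _ _, fun p q hp hq hpq => ?_⟩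
  · rw [Finset.coe_erase, Finset.coe_product]
    exact sdiff_subset.trans
      (prod_mono (coe_midpointValues_subset ha) (coe_midpointValues_subset hb))
  have hmid : ∀ p ∈ S, ∀ q ∈ S, midpoint ℝ p q ∈ S ∪ Prod.map φ φ ⁻¹' ↑B := by
    intro p hp q hq
    by_cases h : midpoint ℝ p q ∈ S
    · exact Or.inl h
    · refine Or.inr (Finset.mem_erase.2 ⟨mt (hS _).2 h, Finset.mem_product.2 ⟨?_, ?_⟩⟩)
      · exact hφ.apply_midpoint_mem ha hp.1 hq.1
      · exact hφ.apply_midpoint_mem hb hp.2 hq.2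
  obtain ⟨δ₁, hδ₁, h₁⟩ := hφ.exists_pairwise_le_dist ha.1
  obtain ⟨δ₂, hδ₂, h₂⟩ := hφ.exists_pairwise_le_dist hb.1
  obtain ⟨t, ht, htB⟩ := exists_lineMap_mem_of_midpoint_mem_union (lt_min hδ₁ hδ₂)
    (h₁.prod_le_dist h₂) hmid ((hS p).2 hp) ((hS q).2 hq) hpq
  exact ⟨t, ht, by rwa [AffineMap.lineMap_apply_module', add_comm] at htB⟩
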